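/- Let N ≥ 1 and a be integers with 1 ≤ a ≤ N, and let k be a fixed nonnegative integer. Then the sequence U_{k,n} = N·((a/N)_{n+1})² / ((n−k)! · (2a/N)_{n+k+1}) (defined for n ≥ k) converges as n → ∞ to N·Γ(2a/N) / (Γ(a/N))² = N / B(a/N, a/N), where Γ is the Gamma function and B(x,y) = Γ(x)Γ(y)/Γ(x+y) is the Beta function. -/

import Mathlib

open Finset Filter

/-- The Pochhammer symbol (rising factorial) `(x)_n = x(x+1)⋯(x+n−1)`. -/
noncomputable def poch (x : ℝ) (n : ℕ) : ℝ := (ascPochhammer ℝ n).eval x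

lemma poch_prod (x : ℝ) : ∀ m : ℕ, poch x m = ∏ j ∈ range m, (x + j)
  | 0 => by simp [poch]
  | m + 1 => by
      rw [poch, ascPochhammer_succ_right, Polynomial.eval_mul, ← poch, poch_prod x m,
        prod_range_succ]
      simp [poch]

lemma poch_succ (x : ℝ) (m : ℕ) : poch x (m + 1) = poch x m * (x + m) := by
  rw [poch, ascPochhammer_succ_right, Polynomial.eval_mul]
  simp [poch]

lemma poch_pos (x : ℝ) (hx : 0 < x) (m : ℕ) : 0 < poch x m :=
  ascPochhammer_pos m x hx

lemma gammaSeq_eq (x : ℝ) (n : ℕ) :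
    Real.GammaSeq x n = (n : ℝ) ^ x * n.factorial / poch x (n + 1) := by
  rw [Real.GammaSeq, poch_prod]

lemma ratio_tendsto_one (c d : ℝ) :
    Tendsto (fun n : ℕ => ((n : ℝ) - c) / ((n : ℝ) + d)) atTop (nhds 1) := by
  have h : Tendsto (fun n : ℕ => 1 - (c + d) / ((n : ℝ) + d)) atTop (nhds 1) := by
    have h0 : Tendsto (fun n : ℕ => (c + d) / ((n : ℝ) + d)) atTop (nhds 0) :=
      Tendsto.div_atTop tendsto_const_nhds
        (tendsto_atTop_add_const_right _ d tendsto_natCast_atTop_atTop)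
    simpa using tendsto_const_nhds.sub h0
  refine h.congr' ?_
  filter_upwards [eventually_gt_atTop (Nat.ceil (|c| + |d| + 1))] with n hn
  have hnd : (n : ℝ) + d ≠ 0 := by
    have : (|c| + |d| + 1 : ℝ) < n := by
      calc (|c| + |d| + 1 : ℝ) ≤ Nat.ceil (|c| + |d| + 1) := Nat.le_ceil _
      _ < n := by exact_mod_cast hn
    nlinarith [abs_nonneg c, neg_abs_le d, le_abs_self d]
  field_simp
  ring

lemma key (x : ℝ) (hx : 0 < x) (C : ℝ) (k : ℕ) :
    Tendsto (fun n : ℕ =>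
        C * poch x (n + 1) ^ 2 / ((n - k).factorial * poch (2 * x) (n + k + 1)))
      atTop (nhds (C * Real.Gamma (2 * x) / Real.Gamma x ^ 2)) := by
  induction k with
  | zero =>
    have hG : (0 : ℝ) < Real.Gamma x := Real.Gamma_pos_of_pos hx
    have h := (((tendsto_const_nhds (x := C)).mul
        (Real.GammaSeq_tendsto_Gamma (2 * x))).div
        ((Real.GammaSeq_tendsto_Gamma x).pow 2) (by positivity))
    refine h.congr' ?_
    filter_upwards [eventually_ge_atTop 1] with n hn
    have np : (0 : ℝ) < n := by exact_mod_cast hn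
    have h2x : (n : ℝ) ^ (2 * x) = (n : ℝ) ^ x * (n : ℝ) ^ x := by
      rw [two_mul, Real.rpow_add np]
    have hP1 : (0 : ℝ) < poch x (n + 1) := poch_pos x hx _
    have hP2 : (0 : ℝ) < poch (2 * x) (n + 1) := poch_pos (2 * x) (by linarith) _
    have hnx : (0 : ℝ) < (n : ℝ) ^ x := Real.rpow_pos_of_pos np x
    have hf : (0 : ℝ) < (n.factorial : ℝ) := by exact_mod_cast n.factorial_pos
    simp only [gammaSeq_eq, Nat.sub_zero, Nat.add_zero, Pi.div_apply]
    rw [h2x]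
    field_simp
  | succ k ih =>
    have h := ih.mul (ratio_tendsto_one (k : ℝ) (2 * x + k + 1))
    rw [mul_one] at h
    refine h.congr' ?_
    filter_upwards [eventually_ge_atTop (k + 1)] with n hn
    have hkn : ((n : ℝ) - k) = ((n - (k + 1) : ℕ) : ℝ) + 1 := by
      rw [Nat.cast_sub hn]; push_cast; ring
    have hfac : ((n - k).factorial : ℝ) = ((n : ℝ) - k) * ((n - (k + 1)).factorial : ℝ) := by
      have e : n - k = (n - (k + 1)) + 1 := by omega
      rw [e, Nat.factorial_succ, hkn]; push_cast; ring
    have hpoch : poch (2 * x) (n + (k + 1) + 1)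
        = poch (2 * x) (n + k + 1) * (2 * x + (n + k + 1 : ℕ)) := by
      have e : n + (k + 1) + 1 = (n + k + 1) + 1 := by omega
      rw [e, poch_succ]
    have hP : (0 : ℝ) < poch (2 * x) (n + k + 1) := poch_pos (2 * x) (by linarith) _
    have hnk : ((n : ℝ) - k) ≠ 0 := by
      have : (k : ℝ) + 1 ≤ n := by exact_mod_cast hn
      linarith
    have hf : ((n - (k + 1)).factorial : ℝ) ≠ 0 := by
      exact_mod_cast (n - (k + 1)).factorial_pos.ne'
    have hd : (2 * x + ((n : ℝ) + k + 1)) ≠ 0 := by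
      have : (0 : ℝ) ≤ (n : ℝ) + k + 1 := by positivity
      linarith
    rw [hfac, hpoch]
    push_cast
    field_simp
    ring

/-- From the proof of Lemma 3.2. -/
theorem tendsto_U_beta
    (N a : ℕ) (h1 : 1 ≤ a) (h2 : a ≤ N) (k : ℕ) :
    Tendsto (fun n : ℕ =>
        (N : ℝ) * poch ((a : ℝ) / N) (n + 1) ^ 2 /
          ((n - k).factorial * poch (2 * (a : ℝ) / N) (n + k + 1)))
      atTop
      (nhds ((N : ℝ) * Real.Gamma (2 * (a : ℝ) / N) / Real.Gamma ((a : ℝ) / N) ^ 2)) ∧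
    (N : ℝ) * Real.Gamma (2 * (a : ℝ) / N) / Real.Gamma ((a : ℝ) / N) ^ 2
      = (N : ℝ) /
          (Real.Gamma ((a : ℝ) / N) * Real.Gamma ((a : ℝ) / N) /
            Real.Gamma ((a : ℝ) / N + (a : ℝ) / N)) := by
  have hN : (0 : ℝ) < N := by
    have : 1 ≤ N := le_trans h1 h2
    exact_mod_cast Nat.lt_of_lt_of_le Nat.zero_lt_one this
  have ha : (0 : ℝ) < a := by exact_mod_cast h1
  have hx : (0 : ℝ) < (a : ℝ) / N := div_pos ha hN
  have hrw : 2 * (a : ℝ) / N = 2 * ((a : ℝ) / N) := by ring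
  constructor
  · have := key ((a : ℝ) / N) hx (N : ℝ) k
    rw [hrw]
    exact this
  · have hG : (0 : ℝ) < Real.Gamma ((a : ℝ) / N) := Real.Gamma_pos_of_pos hx
    have h2 : (a : ℝ) / N + (a : ℝ) / N = 2 * (a : ℝ) / N := by ring
    have hG2 : (0 : ℝ) < Real.Gamma (2 * (a : ℝ) / N) := by
      apply Real.Gamma_pos_of_pos; rw [hrw]; linarith
    rw [h2]
    field_simp
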